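/- Let M be a matroid with finite ground set E, let v : E → ℝ be a weight function taking nonnegative values that is injective on E, let S ⊆ E, and let u ∈ E. If B is a max-weight basis of S, B₁ is a max-weight basis of S ∪ {u}, and B₂ is a max-weight basis of B ∪ {u}, then B₁ = B₂. -/

import Mathlib

open scoped BigOperators

/-- `B` is a max-weight basis of `S` in the matroid `M` w.r.t. the weight function `v`:
`B` is a basis of `S` (a maximal `M`-independent subset of `S`) and every basis `B'`
of `S` has total weight at most that of `B`. -/
def IsMaxWeightBasis {α : Type*} (M : Matroid α) (v : α → ℝ) (S B : Set α) : Prop :=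
  M.IsBasis B S ∧ ∀ B' : Set α, M.IsBasis B' S → ∑ᶠ x ∈ B', v x ≤ ∑ᶠ x ∈ B, v x

/-!
With distinct weights a max-weight basis is the greedy one: `x ∈ S` lies in it exactly when
`x` is not spanned by the elements of `S` heavier than `x`. The heavier part of a max-weight
basis `B` of `S` spans the heavier part of `S`, so `S ∪ {u}` and `B ∪ {u}` have heavier parts
with the same closure, and the greedy descriptions of `B₁` and `B₂` agree.
-/

open Set Matroid

lemma finsum_mem_insert_sdiff_singleton_add {α : Type*} (f : α → ℝ) {s : Set α} {a b : α}
    (hs : s.Finite) (ha : a ∉ s) (hb : b ∈ s) :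
    ∑ᶠ x ∈ insert a s \ {b}, f x + f b = ∑ᶠ x ∈ s, f x + f a := by
  have hab : a ≠ b := fun h => ha (h ▸ hb)
  have hsb := finsum_mem_insert f (fun h : b ∈ s \ {b} => h.2 rfl) hs.sdiff
  rw [insert_sdiff_self_of_mem hb] at hsb
  rw [← insert_sdiff_singleton_comm hab, finsum_mem_insert f (fun h => ha h.1) hs.sdiff, hsb]
  ring

namespace IsMaxWeightBasis

variable {α : Type*} {M : Matroid α} {v : α → ℝ} {S B : Set α} {x : α}

/-- If `x` were independent of the heavier part of `B`, the fundamental circuit of `x` in `B`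
would contain a lighter element `y`, and swapping `y` for `x` would increase the weight. -/
lemma mem_closure_sep_lt (hE : M.E.Finite) (hv : InjOn v M.E) (hB : IsMaxWeightBasis M v S B)
    (hxS : x ∈ S) (hxB : x ∉ B) : x ∈ M.closure {y ∈ B | v x < v y} := by
  by_contra hxT
  have hC := hB.1.indep.fundCircuit_isCircuit (hB.1.subset_closure hxS) hxB
  obtain ⟨y, hyC, hyT⟩ : ∃ y ∈ M.fundCircuit x B, y ∉ insert x {y ∈ B | v x < v y} := by
    by_contra! hCT
    exact hxT <| M.closure_subset_closure (sdiff_singleton_subset_iff.2 hCT)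
      (hC.mem_closure_sdiff_singleton_of_mem (M.mem_fundCircuit x B))
  have hyx : y ≠ x := fun h => hyT (.inl h)
  have hyB : y ∈ B := (M.fundCircuit_subset_insert x B hyC).resolve_left hyx
  have hvyx : v y < v x := by
    refine lt_of_le_of_ne (not_lt.1 fun h => hyT (.inr ⟨hyB, h⟩)) fun h => hyx ?_
    exact hv (hB.1.indep.subset_ground hyB) (hB.1.subset_ground hxS) h
  have hB' : M.IsBasis (insert x B \ {y}) S :=
    hB.1.isBasis_insert_sdiff_of_mem_closure
      (M.closure_subset_closure (sdiff_subset_sdiff_left (M.fundCircuit_subset_insert x B))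
        (hC.mem_closure_sdiff_singleton_of_mem hyC))
      (.inr hyB) hxS
  have hsum := finsum_mem_insert_sdiff_singleton_add v
    (hE.subset hB.1.indep.subset_ground) hxB hyB
  linarith [hB.2 _ hB']

lemma sep_lt_subset_closure (hE : M.E.Finite) (hv : InjOn v M.E) (hB : IsMaxWeightBasis M v S B)
    (c : ℝ) : {y ∈ S | c < v y} ⊆ M.closure {y ∈ B | c < v y} := by
  rintro z ⟨hzS, hcz⟩
  by_cases hzB : z ∈ B
  · exact M.mem_closure_of_mem' (X := {y ∈ B | c < v y}) ⟨hzB, hcz⟩ (hB.1.subset_ground hzS)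
  · refine M.closure_subset_closure ?_ (hB.mem_closure_sep_lt hE hv hzS hzB)
    exact fun y hy => ⟨hy.1, hcz.trans hy.2⟩

lemma closure_sep_lt_eq (hE : M.E.Finite) (hv : InjOn v M.E) (hB : IsMaxWeightBasis M v S B)
    (c : ℝ) : M.closure {y ∈ B | c < v y} = M.closure {y ∈ S | c < v y} := by
  refine (M.closure_subset_closure ?_).antisymm
    (M.closure_subset_closure_of_subset_closure (hB.sep_lt_subset_closure hE hv c))
  exact fun y hy => ⟨hB.1.subset hy.1, hy.2⟩

lemma closure_sep_lt_union_eq (hE : M.E.Finite) (hv : InjOn v M.E)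
    (hB : IsMaxWeightBasis M v S B) (X : Set α) (c : ℝ) :
    M.closure {y ∈ B ∪ X | c < v y} = M.closure {y ∈ S ∪ X | c < v y} := by
  rw [show {y ∈ B ∪ X | c < v y} = _ from sep_union,
    show {y ∈ S ∪ X | c < v y} = _ from sep_union]
  exact closure_union_congr_left (hB.closure_sep_lt_eq hE hv c)

lemma mem_iff_notMem_closure_sep_lt (hE : M.E.Finite) (hv : InjOn v M.E)
    (hB : IsMaxWeightBasis M v S B) :
    x ∈ B ↔ x ∈ S ∧ x ∉ M.closure {y ∈ S | v x < v y} := by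
  rw [← hB.closure_sep_lt_eq hE hv]
  refine ⟨fun hxB => ⟨hB.1.subset hxB, fun hx => ?_⟩, fun ⟨hxS, hx⟩ => ?_⟩
  · refine hB.1.indep.notMem_closure_sdiff_of_mem hxB (M.closure_subset_closure ?_ hx)
    exact fun y hy => ⟨hy.1, fun h => (h ▸ hy.2).false⟩
  · exact by_contra fun hxB => hx (hB.mem_closure_sep_lt hE hv hxS hxB)

end IsMaxWeightBasis

theorem maxWeightBasis_insert_eq_maxWeightBasis_of_maxWeightBasis_general {α : Type*}
    (M : Matroid α) (hE : M.E.Finite)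
    (v : α → ℝ) (hvinj : Set.InjOn v M.E)
    (S : Set α) (u : α)
    (B B₁ B₂ : Set α)
    (hB : IsMaxWeightBasis M v S B)
    (hB₁ : IsMaxWeightBasis M v (S ∪ {u}) B₁)
    (hB₂ : IsMaxWeightBasis M v (B ∪ {u}) B₂) :
    B₁ = B₂ := by
  ext x
  rw [hB₁.mem_iff_notMem_closure_sep_lt hE hvinj, hB₂.mem_iff_notMem_closure_sep_lt hE hvinj,
    hB.closure_sep_lt_union_eq hE hvinj]
  have hspan (hxS : x ∈ S) (hxB : x ∉ B) : x ∈ M.closure {y ∈ S ∪ {u} | v x < v y} := by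
    have hx := (hB.mem_iff_notMem_closure_sep_lt hE hvinj).not.1 hxB
    refine M.closure_subset_closure ?_ (by simpa [hxS] using hx)
    exact fun y hy => ⟨.inl hy.1, hy.2⟩
  constructor
  · rintro ⟨hxS | hxu, hx⟩
    · exact ⟨.inl (by_contra fun hxB => hx (hspan hxS hxB)), hx⟩
    · exact ⟨.inr hxu, hx⟩
  · rintro ⟨hxB | hxu, hx⟩
    · exact ⟨.inl (hB.1.subset hxB), hx⟩
    · exact ⟨.inr hxu, hx⟩

/-- The max-weight basis of `S ∪ {u}` equals the max-weight basis of
`MWB(S) ∪ {u}`: if `B` is a max-weight basis of `S`, `B₁` a max-weight basis of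
`S ∪ {u}`, and `B₂` a max-weight basis of `B ∪ {u}`, then `B₁ = B₂`. -/
theorem maxWeightBasis_insert_eq_maxWeightBasis_of_maxWeightBasis {α : Type*}
    (M : Matroid α) (hE : M.E.Finite)
    (v : α → ℝ) (hv0 : ∀ x ∈ M.E, 0 ≤ v x) (hvinj : Set.InjOn v M.E)
    (S : Set α) (hSE : S ⊆ M.E) (u : α) (hu : u ∈ M.E)
    (B B₁ B₂ : Set α)
    (hB : IsMaxWeightBasis M v S B)
    (hB₁ : IsMaxWeightBasis M v (S ∪ {u}) B₁)
    (hB₂ : IsMaxWeightBasis M v (B ∪ {u}) B₂) :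
    B₁ = B₂ :=
  maxWeightBasis_insert_eq_maxWeightBasis_of_maxWeightBasis_general M hE v hvinj S u B B₁ B₂ hB hB₁
    hB₂
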